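/- Let c ≥ 2 and d, n ≥ 1. Fix X ∈ ℝ^{d×n}, γ, β ∈ ℝ^c, and C ∈ ℝ^{c×n}. For W ∈ ℝ^{c×d} and b ∈ ℝ^c set Z = WX + b·1ₙᵀ ∈ ℝ^{c×n}, and let Ẑ ∈ ℝ^{c×n} be the matrix whose j-th column is N(Zⱼ), the z-score normalization of the j-th column Zⱼ ∈ ℝ^c (with the mean and standard deviation taken over the c entries of the column). Suppose at (W₀, b₀) every column Zⱼ of Z₀ = W₀X + b₀·1ₙᵀ satisfies σ(Zⱼ) > 0. Define L(W, b) = ‖(γ·1ₙᵀ) ⊙ Ẑ + β·1ₙᵀ + C‖_F². Then L is differentiable at (W₀, b₀), and its partial gradients are ∇_W L = Δ₃·Xᵀ and ∇_b L = Δ₃·1ₙ, where Δ₁ = (γ·1ₙᵀ) ⊙ Ẑ + β·1ₙᵀ + C, Δ₂ = 2(γ·1ₙᵀ) ⊙ Δ₁, and the j-th column of Δ₃ is (1/σ(Zⱼ))·(Δ₂,ⱼ − (1/c)(1_cᵀΔ₂,ⱼ)·1_c − (1/c)(ẑⱼᵀΔ₂,ⱼ)·ẑⱼ), with ẑⱼ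 the j-th column of Ẑ (all matrices evaluated at (W₀, b₀)). -/

import Mathlib

/-!
The z-score map `N` has derivative `v ↦ σ⁻¹ (P v − c⁻¹ ⟨ẑ, v⟩ ẑ)` at `z`, where `P = I − c⁻¹ 𝟙𝟙ᵀ`
is the centering projection, `σ = σ(z)` and `ẑ = N(z)`: differentiate `N = σ⁻¹ P` and use
`∇σ = c⁻¹ ẑ`, which follows from `σ² = c⁻¹ ‖P z‖²`. This derivative is self-adjoint, so the
gradient of `f ∘ N` at `z` is `σ⁻¹ (P g − c⁻¹ ⟨ẑ, g⟩ ẑ)` with `g = ∇f(ẑ)`. The loss is the sum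
over `j` of `f_j(N(Zⱼ))` with `f_j(y) = ∑ᵢ (γᵢ yᵢ + βᵢ + Cᵢⱼ)²`, whose gradient at `ẑⱼ` is the
`j`-th column of `Δ₂`, so the gradient in `Zⱼ` is the `j`-th column of `Δ₃`. Finally
`Zⱼ = W Xⱼ + b` is affine in `(W, b)`, and the adjoint of `W ↦ W Xⱼ` sends `g` to `g Xⱼᵀ`;
summing over the columns gives `Δ₃ Xᵀ` and `Δ₃ 1ₙ`.
-/

/-- Mean of a vector. -/
noncomputable def zmean {c : ℕ} (z : EuclideanSpace ℝ (Fin c)) : ℝ :=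
  (1 / (c : ℝ)) * ∑ i, z i

/-- Standard deviation of a vector. -/
noncomputable def zstd {c : ℕ} (z : EuclideanSpace ℝ (Fin c)) : ℝ :=
  Real.sqrt ((1 / (c : ℝ)) * ∑ i, (z i - zmean z) ^ 2)

/-- Z-score normalization `N(z) = (z − μ(z)·1)/σ(z)`. -/
noncomputable def znorm {c : ℕ} (z : EuclideanSpace ℝ (Fin c)) :
    EuclideanSpace ℝ (Fin c) :=
  WithLp.toLp 2 (fun i => (z i - zmean z) / zstd z)

/-- `j`-th column of `Z = WX + b·1ₙᵀ`, i.e. `(Zⱼ)ᵢ = ∑ₖ Wᵢₖ Xₖⱼ + bᵢ`. -/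
noncomputable def Zcol {c d n : ℕ} (X : Matrix (Fin d) (Fin n) ℝ)
    (W : EuclideanSpace ℝ (Fin c × Fin d)) (b : EuclideanSpace ℝ (Fin c))
    (j : Fin n) : EuclideanSpace ℝ (Fin c) :=
  WithLp.toLp 2 (fun i => (∑ k, W (i, k) * X k j) + b i)

/-- Entries of `Ẑ`: the columnwise z-score normalization of `Z`. -/
noncomputable def Zhat {c d n : ℕ} (X : Matrix (Fin d) (Fin n) ℝ)
    (W : EuclideanSpace ℝ (Fin c × Fin d)) (b : EuclideanSpace ℝ (Fin c))
    (i : Fin c) (j : Fin n) : ℝ :=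
  znorm (Zcol X W b j) i

/-- `Δ₁ = (γ·1ₙᵀ) ⊙ Ẑ + β·1ₙᵀ + C`. -/
noncomputable def Delta1 {c d n : ℕ} (X : Matrix (Fin d) (Fin n) ℝ)
    (γ β : Fin c → ℝ) (C : Matrix (Fin c) (Fin n) ℝ)
    (W : EuclideanSpace ℝ (Fin c × Fin d)) (b : EuclideanSpace ℝ (Fin c))
    (i : Fin c) (j : Fin n) : ℝ :=
  γ i * Zhat X W b i j + β i + C i j

/-- `Δ₂ = 2(γ·1ₙᵀ) ⊙ Δ₁`. -/
noncomputable def Delta2 {c d n : ℕ} (X : Matrix (Fin d) (Fin n) ℝ)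
    (γ β : Fin c → ℝ) (C : Matrix (Fin c) (Fin n) ℝ)
    (W : EuclideanSpace ℝ (Fin c × Fin d)) (b : EuclideanSpace ℝ (Fin c))
    (i : Fin c) (j : Fin n) : ℝ :=
  2 * γ i * Delta1 X γ β C W b i j

/-- `Δ₃`, whose `j`-th column is
`(1/σ(Zⱼ))·(Δ₂ⱼ − (1/c)(1ᵀΔ₂ⱼ)·1 − (1/c)(ẑⱼᵀΔ₂ⱼ)·ẑⱼ)`. -/
noncomputable def Delta3 {c d n : ℕ} (X : Matrix (Fin d) (Fin n) ℝ)
    (γ β : Fin c → ℝ) (C : Matrix (Fin c) (Fin n) ℝ)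
    (W : EuclideanSpace ℝ (Fin c × Fin d)) (b : EuclideanSpace ℝ (Fin c))
    (i : Fin c) (j : Fin n) : ℝ :=
  (zstd (Zcol X W b j))⁻¹ *
    (Delta2 X γ β C W b i j
      - (1 / (c : ℝ)) * (∑ i', Delta2 X γ β C W b i' j)
      - (1 / (c : ℝ)) * (∑ i', Zhat X W b i' j * Delta2 X γ β C W b i' j) *
          Zhat X W b i j)

open scoped RealInnerProductSpace

section Gradient

variable {𝕜 F : Type*} [RCLike 𝕜] [NormedAddCommGroup F] [InnerProductSpace 𝕜 F] [CompleteSpace F]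

theorem HasGradientAt.fun_sum {ι : Type*} {s : Finset ι} {f : ι → F → 𝕜} {g : ι → F} {x : F}
    (h : ∀ j ∈ s, HasGradientAt (f j) (g j) x) :
    HasGradientAt (fun y => ∑ j ∈ s, f j y) (∑ j ∈ s, g j) x := by
  rw [hasGradientAt_iff_hasFDerivAt, map_sum]
  exact HasFDerivAt.fun_sum h

variable {G : Type*} [NormedAddCommGroup G] [InnerProductSpace 𝕜 G] [CompleteSpace G]

theorem HasGradientAt.comp_const_add {f : F → 𝕜} {g a x : F} (h : HasGradientAt f g (a + x)) :
    HasGradientAt (fun y => f (a + y)) g x := by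
  rw [hasGradientAt_iff_hasFDerivAt] at h ⊢
  have h' := h.comp x ((hasFDerivAt_id x).const_add a)
  rwa [ContinuousLinearMap.comp_id] at h'

theorem HasGradientAt.comp_clm_add_const {f : G → 𝕜} {g : G} (A : F →L[𝕜] G) (b : G) {x : F}
    (h : HasGradientAt f g (A x + b)) :
    HasGradientAt (fun y => f (A y + b)) (A.adjoint g) x := by
  rw [hasGradientAt_iff_hasFDerivAt] at h ⊢
  refine (h.comp x (A.hasFDerivAt.add_const b)).congr_fderiv ?_
  ext v
  simp [ContinuousLinearMap.adjoint_inner_left]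

end Gradient

theorem hasGradientAt_sum_sq_affine {ι : Type*} [Fintype ι] (a b : ι → ℝ)
    (y₀ : EuclideanSpace ℝ ι) :
    HasGradientAt (fun y : EuclideanSpace ℝ ι => ∑ i, (a i * y i + b i) ^ 2)
      (WithLp.toLp 2 fun i => 2 * a i * (a i * y₀ i + b i)) y₀ := by
  have hterm (i : ι) :=
    ((((EuclideanSpace.proj (𝕜 := ℝ) (ι := ι) i).hasFDerivAt (x := y₀)).const_mul (a i)).add_const
      (b i)).pow 2
  refine (HasFDerivAt.fun_sum fun i _ => hterm i).congr_fderiv ?_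
  ext v
  simp only [PiLp.proj_apply, Nat.add_one_sub_one, pow_one, smul_add, nsmul_eq_mul,
    Nat.cast_ofNat, sum_apply, smul_apply, smul_eq_mul,
    InnerProductSpace.toDual_apply_apply, PiLp.inner_apply, RCLike.inner_apply, conj_trivial]
  exact Finset.sum_congr rfl fun _ _ => by ring

section ZScore

variable {c : ℕ}

local notation "E" => EuclideanSpace ℝ (Fin c)

noncomputable def zcenter : E →L[ℝ] E :=
  LinearMap.toContinuousLinearMap
    { toFun := fun z => WithLp.toLp 2 fun i => z i - zmean z
      map_add' := fun u v => by
        ext i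
        simp only [zmean, PiLp.add_apply, Finset.sum_add_distrib]
        ring
      map_smul' := fun r u => by
        ext i
        simp only [zmean, PiLp.smul_apply, smul_eq_mul, ← Finset.mul_sum, RingHom.id_apply]
        ring }

theorem zcenter_apply (z : E) (i : Fin c) : zcenter z i = z i - zmean z := rfl

theorem zmean_zcenter (hc : c ≠ 0) (z : E) : zmean (zcenter z) = 0 := by
  simp only [zmean, zcenter_apply, Finset.sum_sub_distrib, Finset.sum_const, Finset.card_univ,
    Fintype.card_fin, nsmul_eq_mul]
  field_simp
  ring

theorem zcenter_zcenter (hc : c ≠ 0) (z : E) : zcenter (zcenter z) = zcenter z := by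
  ext i
  rw [zcenter_apply, zmean_zcenter hc, sub_zero]

theorem inner_zcenter_left_eq_right (u v : E) : ⟪zcenter u, v⟫ = ⟪u, zcenter v⟫ := by
  simp only [PiLp.inner_apply, zcenter_apply, zmean,
    RCLike.inner_apply, conj_trivial, sub_mul, mul_sub, Finset.sum_sub_distrib,
    ← Finset.sum_mul, ← Finset.mul_sum]
  ring

theorem inner_zcenter_zcenter (hc : c ≠ 0) (u v : E) :
    ⟪zcenter u, zcenter v⟫ = ⟪zcenter u, v⟫ := by
  rw [← inner_zcenter_left_eq_right, zcenter_zcenter hc]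

theorem znorm_eq_smul_zcenter (z : E) : znorm z = (zstd z)⁻¹ • zcenter z := by
  ext i
  simp [znorm, zcenter_apply, div_eq_inv_mul]

theorem zstd_eq_sqrt_inner (z : E) :
    zstd z = √((c : ℝ)⁻¹ * ⟪zcenter z, zcenter z⟫) := by
  simp only [zstd, PiLp.inner_apply, zcenter_apply, RCLike.inner_apply, conj_trivial, sq, one_div]

theorem ne_zero_of_zstd_pos {z : E} (h : 0 < zstd z) : c ≠ 0 := by
  rintro rfl
  simp [zstd] at h

theorem hasGradientAt_zstd {z : E} (h : 0 < zstd z) :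
    HasGradientAt zstd ((c : ℝ)⁻¹ • znorm z) z := by
  have hc := ne_zero_of_zstd_pos h
  have hvar : (c : ℝ)⁻¹ * ⟪zcenter z, zcenter z⟫ ≠ 0 := by
    rw [zstd_eq_sqrt_inner] at h
    exact (Real.sqrt_pos.1 h).ne'
  have hd := ((zcenter.hasFDerivAt.inner ℝ zcenter.hasFDerivAt).const_mul (c : ℝ)⁻¹).sqrt hvar
  rw [← funext zstd_eq_sqrt_inner, ← zstd_eq_sqrt_inner] at hd
  rw [hasGradientAt_iff_hasFDerivAt]
  refine hd.congr_fderiv ?_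
  ext v
  simp only [smul_apply, ContinuousLinearMap.comp_apply,
    ContinuousLinearMap.prod_apply, fderivInnerCLM_apply, InnerProductSpace.toDual_apply_apply,
    znorm_eq_smul_zcenter, inner_smul_left, conj_trivial, smul_eq_mul]
  rw [real_inner_comm (zcenter z) (zcenter v), inner_zcenter_zcenter hc]
  ring

theorem hasFDerivAt_znorm {z : E} (h : 0 < zstd z) :
    HasFDerivAt znorm ((zstd z)⁻¹ •
      (zcenter - (c : ℝ)⁻¹ • (innerSL ℝ (znorm z)).smulRight (znorm z))) z := by
  have hd : HasFDerivAt (fun w => (zstd w)⁻¹ • zcenter w) _ z :=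
    ((hasDerivAt_inv h.ne').comp_hasFDerivAt z (hasGradientAt_zstd h).hasFDerivAt).smul
      zcenter.hasFDerivAt
  refine (hd.congr_fderiv ?_).congr_of_eventuallyEq (.of_forall znorm_eq_smul_zcenter)
  ext v
  simp only [Function.comp_apply, znorm_eq_smul_zcenter, map_smul, neg_smul,
    add_apply, smul_apply,
    ContinuousLinearMap.smulRight_apply, neg_apply,
    InnerProductSpace.toDual_apply_apply, smul_eq_mul, PiLp.add_apply, PiLp.smul_apply,
    PiLp.neg_apply, sub_apply, coe_innerSL_apply, PiLp.sub_apply]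
  ring

theorem HasGradientAt.comp_znorm {f : E → ℝ} {g z : E} (hf : HasGradientAt f g (znorm z))
    (h : 0 < zstd z) :
    HasGradientAt (fun w => f (znorm w))
      ((zstd z)⁻¹ • (zcenter g - ((c : ℝ)⁻¹ * ⟪znorm z, g⟫) • znorm z)) z := by
  rw [hasGradientAt_iff_hasFDerivAt] at hf ⊢
  refine (hf.comp z (hasFDerivAt_znorm h)).congr_fderiv ?_
  ext v
  simp only [ContinuousLinearMap.comp_apply, InnerProductSpace.toDual_apply_apply,
    smul_apply, sub_apply,
    ContinuousLinearMap.smulRight_apply, coe_innerSL_apply, inner_smul_left, inner_smul_right,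
    inner_sub_left, inner_sub_right, inner_zcenter_left_eq_right, real_inner_comm g, conj_trivial]
  ring

end ZScore

section Layer

variable {ι κ m : Type*} [Fintype ι] [Fintype κ]

noncomputable def mulColCLM (X : Matrix κ m ℝ) (j : m) :
    EuclideanSpace ℝ (ι × κ) →L[ℝ] EuclideanSpace ℝ ι :=
  LinearMap.toContinuousLinearMap
    { toFun := fun W => WithLp.toLp 2 fun i => ∑ k, W (i, k) * X k j
      map_add' := fun U V => by
        ext i
        simp [Finset.sum_add_distrib, add_mul]
      map_smul' := fun r U => by
        ext i
        simp [Finset.mul_sum, mul_assoc] }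

theorem mulColCLM_apply (X : Matrix κ m ℝ) (j : m) (W : EuclideanSpace ℝ (ι × κ)) (i : ι) :
    mulColCLM X j W i = ∑ k, W (i, k) * X k j := rfl

theorem adjoint_mulColCLM_apply (X : Matrix κ m ℝ) (j : m) (g : EuclideanSpace ℝ ι) :
    (mulColCLM X j).adjoint g = WithLp.toLp 2 fun q => g q.1 * X q.2 j := by
  refine ext_inner_right ℝ fun v => ?_
  rw [ContinuousLinearMap.adjoint_inner_left]
  simp only [PiLp.inner_apply, mulColCLM_apply, RCLike.inner_apply, conj_trivial, Finset.sum_mul,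
    Fintype.sum_prod_type]
  exact Finset.sum_congr rfl fun _ _ => Finset.sum_congr rfl fun _ _ => by ring

end Layer

theorem Zcol_eq_mulColCLM_add {c d n : ℕ} (X : Matrix (Fin d) (Fin n) ℝ)
    (W : EuclideanSpace ℝ (Fin c × Fin d)) (b : EuclideanSpace ℝ (Fin c)) (j : Fin n) :
    Zcol X W b j = mulColCLM X j W + b := rfl

theorem hasGradientAt_columnLoss {c d n : ℕ} (X : Matrix (Fin d) (Fin n) ℝ) (γ β : Fin c → ℝ)
    (C : Matrix (Fin c) (Fin n) ℝ) (W₀ : EuclideanSpace ℝ (Fin c × Fin d))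
    (b₀ : EuclideanSpace ℝ (Fin c)) (j : Fin n) (hσ : 0 < zstd (Zcol X W₀ b₀ j)) :
    HasGradientAt (fun z : EuclideanSpace ℝ (Fin c) => ∑ i, (γ i * znorm z i + β i + C i j) ^ 2)
      (WithLp.toLp 2 fun i => Delta3 X γ β C W₀ b₀ i j) (Zcol X W₀ b₀ j) := by
  have h := (hasGradientAt_sum_sq_affine γ (fun i => β i + C i j) _).comp_znorm hσ
  convert h using 1
  · simp only [add_assoc]
  · ext i
    simp only [Delta3, Delta2, Delta1, Zhat, PiLp.smul_apply, PiLp.sub_apply, zcenter_apply, zmean,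
      PiLp.inner_apply, RCLike.inner_apply, conj_trivial, smul_eq_mul, add_assoc, one_div]
    congr 4
    exact Finset.sum_congr rfl fun _ _ => mul_comm _ _

theorem stmt_12_general {c d n : ℕ}
    (X : Matrix (Fin d) (Fin n) ℝ) (γ β : Fin c → ℝ)
    (C : Matrix (Fin c) (Fin n) ℝ)
    (W₀ : EuclideanSpace ℝ (Fin c × Fin d)) (b₀ : EuclideanSpace ℝ (Fin c))
    (hσ : ∀ j : Fin n, 0 < zstd (Zcol X W₀ b₀ j)) :
    DifferentiableAt ℝ
      (fun Wb : EuclideanSpace ℝ (Fin c × Fin d) × EuclideanSpace ℝ (Fin c) =>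
        ∑ i, ∑ j, (γ i * Zhat X Wb.1 Wb.2 i j + β i + C i j) ^ 2) (W₀, b₀)
    ∧ HasGradientAt
        (fun W : EuclideanSpace ℝ (Fin c × Fin d) =>
          ∑ i, ∑ j, (γ i * Zhat X W b₀ i j + β i + C i j) ^ 2)
        ((WithLp.toLp 2 (fun q => ∑ j, Delta3 X γ β C W₀ b₀ q.1 j * X q.2 j) :
          EuclideanSpace ℝ (Fin c × Fin d))) W₀
    ∧ HasGradientAt
        (fun b : EuclideanSpace ℝ (Fin c) =>
          ∑ i, ∑ j, (γ i * Zhat X W₀ b i j + β i + C i j) ^ 2)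
        ((WithLp.toLp 2 (fun i => ∑ j, Delta3 X γ β C W₀ b₀ i j) :
          EuclideanSpace ℝ (Fin c))) b₀ := by
  have hcol j := hasGradientAt_columnLoss X γ β C W₀ b₀ j (hσ j)
  simp only [Zhat, Zcol_eq_mulColCLM_add, Finset.sum_comm (s := (Finset.univ : Finset (Fin c)))]
  refine ⟨?_, ?_, ?_⟩
  · refine DifferentiableAt.fun_sum fun j _ => ?_
    have hZ : DifferentiableAt ℝ (fun Wb : _ × _ => mulColCLM X j Wb.1 + Wb.2) (W₀, b₀) :=
      ((mulColCLM X j).differentiableAt.comp _ differentiableAt_fst).add differentiableAt_snd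
    have hcomp := (hcol j).differentiableAt.comp (W₀, b₀) hZ
    exact hcomp
  · convert HasGradientAt.fun_sum fun j _ => (hcol j).comp_clm_add_const (mulColCLM X j) b₀
      using 1
    ext q
    simp [adjoint_mulColCLM_apply]
  · convert HasGradientAt.fun_sum fun j _ => (hcol j).comp_const_add (a := mulColCLM X j W₀)
      using 1
    ext i
    simp

/-- Gradients of the layer-norm style loss
`L(W, b) = ‖(γ·1ₙᵀ) ⊙ Ẑ + β·1ₙᵀ + C‖_F²` with `Ẑ` the columnwise z-score
normalization of `Z = WX + b·1ₙᵀ`: at a point where every column of `Z₀` has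
positive standard deviation, `L` is differentiable, `∇_W L = Δ₃·Xᵀ`, and
`∇_b L = Δ₃·1ₙ`. -/
theorem stmt_12 {c d n : ℕ} (hc : 2 ≤ c) (hd : 1 ≤ d) (hn : 1 ≤ n)
    (X : Matrix (Fin d) (Fin n) ℝ) (γ β : Fin c → ℝ)
    (C : Matrix (Fin c) (Fin n) ℝ)
    (W₀ : EuclideanSpace ℝ (Fin c × Fin d)) (b₀ : EuclideanSpace ℝ (Fin c))
    (hσ : ∀ j : Fin n, 0 < zstd (Zcol X W₀ b₀ j)) :
    DifferentiableAt ℝ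
      (fun Wb : EuclideanSpace ℝ (Fin c × Fin d) × EuclideanSpace ℝ (Fin c) =>
        ∑ i, ∑ j, (γ i * Zhat X Wb.1 Wb.2 i j + β i + C i j) ^ 2) (W₀, b₀)
    ∧ HasGradientAt
        (fun W : EuclideanSpace ℝ (Fin c × Fin d) =>
          ∑ i, ∑ j, (γ i * Zhat X W b₀ i j + β i + C i j) ^ 2)
        ((WithLp.toLp 2 (fun q => ∑ j, Delta3 X γ β C W₀ b₀ q.1 j * X q.2 j) :
          EuclideanSpace ℝ (Fin c × Fin d))) W₀
    ∧ HasGradientAt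
        (fun b : EuclideanSpace ℝ (Fin c) =>
          ∑ i, ∑ j, (γ i * Zhat X W₀ b i j + β i + C i j) ^ 2)
        ((WithLp.toLp 2 (fun i => ∑ j, Delta3 X γ β C W₀ b₀ i j) :
          EuclideanSpace ℝ (Fin c))) b₀ :=
  stmt_12_general X γ β C W₀ b₀ hσ
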